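/- Let n ≥ 2, q ≥ nd, σ, σ_1,…,σ_n ∈ R^{d×q}, p_1,…,p_n ∈ (0,1) with Σ_i p_i = 1, and set Σ_i = σ_i σ_i*. Then the existence of Γ ∈ S_+(nd) with i-th diagonal d×d block equal to Σ_i and σσ* ≤ (p_1 I_d,…,p_n I_d) Γ (p_1 I_d,…,p_n I_d)* is equivalent to the existence of orthogonal matrices O_1,…,O_n ∈ R^{q×q} such that σσ* ≤ (Σ_i p_i σ_i O_i)(Σ_i p_i σ_i O_i)*. -/

import Mathlib

open MeasureTheory ProbabilityTheory Matrix

/-- The positive semidefinite square root of a positive semidefinite matrix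
(the definition `Matrix.PosSemidef.sqrt` of the older Mathlib, removed since). -/
noncomputable def Matrix.PosSemidef.sqrt {n 𝕜 : Type*} [Fintype n] [DecidableEq n] [RCLike 𝕜]
    [PartialOrder 𝕜] {A : Matrix n n 𝕜} (hA : A.PosSemidef) : Matrix n n 𝕜 :=
  (hA.1.eigenvectorUnitary : Matrix n n 𝕜) *
    diagonal (fun i => ((√(hA.1.eigenvalues i) : ℝ) : 𝕜)) *
    (star hA.1.eigenvectorUnitary : Matrix n n 𝕜)

noncomputable def stdGaussianPi (d : ℕ) : Measure (Fin d → ℝ) :=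
  Measure.pi fun _ => gaussianReal 0 1

/-- The Gaussian law `N_d(m, S)` on `ℝ^d`, defined as the image of the standard Gaussian
by `z ↦ m + S^{1/2} z`. -/
noncomputable def gaussianPi {d : ℕ} (m : Fin d → ℝ) {S : Matrix (Fin d) (Fin d) ℝ}
    (hS : S.PosSemidef) : Measure (Fin d → ℝ) :=
  Measure.map (fun z => m + hS.sqrt.mulVec z) (stdGaussianPi d)

/-- Convex order between measures: `μ ≤_cx ν`. -/
def ConvexOrder {E : Type*} [NormedAddCommGroup E] [NormedSpace ℝ E] [MeasurableSpace E]
    (μ ν : Measure E) : Prop :=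
  ∀ φ : E → ℝ, ConvexOn ℝ Set.univ φ → Integrable φ μ → Integrable φ ν →
    ∫ x, φ x ∂μ ≤ ∫ x, φ x ∂ν

/-! Since `q ≥ nd`, a Gram matrix `Γ ∈ S_+(nd)` factors as `Γ = C Cᵀ` with `C ∈ ℝ^{nd×q}`. The
`d`-row blocks `C_i` of `C` then satisfy `C_i C_iᵀ = σ_i σ_iᵀ`, so `C_i = σ_i O_i` with `O_i`
orthogonal, and `(p_1 I, …, p_n I) C = ∑ p_i σ_i O_i`; hence
`(p_1 I, …, p_n I) Γ (p_1 I, …, p_n I)ᵀ = (∑ p_i σ_i O_i)(∑ p_i σ_i O_i)ᵀ`.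
Conversely, stacking the blocks `σ_i O_i` into `C` gives `Γ = C Cᵀ`. -/

open scoped MatrixOrder ComplexOrder

theorem LinearMap.exists_linearIsometry_comp_eq_of_norm_eq {𝕜 E W : Type*} [RCLike 𝕜]
    [AddCommGroup E] [Module 𝕜 E] [NormedAddCommGroup W] [InnerProductSpace 𝕜 W]
    [FiniteDimensional 𝕜 W] {f g : E →ₗ[𝕜] W} (h : ∀ x, ‖f x‖ = ‖g x‖) :
    ∃ U : W →ₗᵢ[𝕜] W, ∀ x, U (f x) = g x := by
  have hker : ker f ≤ ker g := fun x hx => by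
    rw [mem_ker, ← norm_eq_zero, ← h, mem_ker.mp hx, norm_zero]
  let L : range f →ₗ[𝕜] W := (ker f).liftQ g hker ∘ₗ f.quotKerEquivRange.symm.toLinearMap
  have hL : ∀ x, L ⟨f x, mem_range_self f x⟩ = g x := fun x => by
    simp [L, quotKerEquivRange_symm_apply_image]
  let L' : range f →ₗᵢ[𝕜] W := ⟨L, by rintro ⟨_, x, rfl⟩; rw [hL]; exact (h x).symm⟩
  exact ⟨L'.extend, fun x => (L'.extend_apply ⟨f x, mem_range_self f x⟩).trans (hL x)⟩

namespace Matrix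

theorem toEuclideanLin_symm_mem_unitaryGroup {n 𝕜 : Type*} [Fintype n] [DecidableEq n]
    [RCLike 𝕜] (U : EuclideanSpace 𝕜 n →ₗᵢ[𝕜] EuclideanSpace 𝕜 n) :
    toEuclideanLin.symm U.toLinearMap ∈ unitaryGroup n 𝕜 := by
  rw [mem_unitaryGroup_iff', star_eq_conjTranspose]
  apply toEuclideanLin.injective
  rw [toLpLin_mul_same, toEuclideanLin_conjTranspose_eq_adjoint, LinearEquiv.apply_symm_apply,
    U.adjoint_comp_self', toLpLin_one]

section Factorization

variable {m n 𝕜 : Type*} [Fintype m] [DecidableEq m] [Fintype n] [DecidableEq n] [RCLike 𝕜]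

theorem norm_toEuclideanLin_conjTranspose_eq {A B : Matrix m n 𝕜} (h : A * Aᴴ = B * Bᴴ)
    (x : EuclideanSpace 𝕜 m) : ‖toEuclideanLin Aᴴ x‖ = ‖toEuclideanLin Bᴴ x‖ := by
  have inner_self : ∀ C : Matrix m n 𝕜, inner 𝕜 (toEuclideanLin Cᴴ x) (toEuclideanLin Cᴴ x) =
      inner 𝕜 (toEuclideanLin (C * Cᴴ) x) x := fun C => by
    rw [← LinearMap.adjoint_inner_left, ← toEuclideanLin_conjTranspose_eq_adjoint,
      conjTranspose_conjTranspose, toLpLin_mul_same]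
    rfl
  rw [@norm_eq_sqrt_re_inner 𝕜, @norm_eq_sqrt_re_inner 𝕜, inner_self, inner_self, h]

/-- Equal Gram matrices make `x ↦ σᴴ x` and `x ↦ Θᴴ x` differ by an isometry on the range of
`σᴴ`, which extends to a unitary of the whole space. -/
theorem exists_mem_unitaryGroup_eq_mul_of_mul_conjTranspose_eq {Θ σ : Matrix m n 𝕜}
    (h : Θ * Θᴴ = σ * σᴴ) : ∃ O ∈ unitaryGroup n 𝕜, Θ = σ * O := by
  obtain ⟨U, hU⟩ := LinearMap.exists_linearIsometry_comp_eq_of_norm_eq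
    (norm_toEuclideanLin_conjTranspose_eq h.symm)
  set O := toEuclideanLin.symm U.toLinearMap
  have hO : O * σᴴ = Θᴴ := toEuclideanLin.injective <| by
    ext1 x
    rw [toLpLin_mul_same, LinearMap.comp_apply, LinearEquiv.apply_symm_apply]
    exact hU x
  refine ⟨star O, Unitary.star_mem (toEuclideanLin_symm_mem_unitaryGroup U), ?_⟩
  rw [star_eq_conjTranspose, ← conjTranspose_conjTranspose Θ, ← hO, conjTranspose_mul,
    conjTranspose_conjTranspose]

end Factorization

theorem PosSemidef.exists_eq_mul_conjTranspose_of_embedding {ι κ 𝕜 : Type*}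
    [Fintype ι] [DecidableEq ι] [Fintype κ] [DecidableEq κ] [RCLike 𝕜]
    {Γ : Matrix ι ι 𝕜} (hΓ : Γ.PosSemidef) (e : ι ↪ κ) : ∃ C : Matrix ι κ 𝕜, Γ = C * Cᴴ := by
  obtain ⟨B, rfl⟩ := CStarAlgebra.nonneg_iff_eq_star_mul_self.mp hΓ.nonneg
  set E : Matrix ι κ 𝕜 := (1 : Matrix κ κ 𝕜).submatrix e id
  have hE : E * Eᴴ = 1 := by
    rw [conjTranspose_submatrix, conjTranspose_one, ← submatrix_mul _ _ _ _ _ Function.bijective_id,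
      Matrix.mul_one, submatrix_one_embedding]
  refine ⟨Bᴴ * E, ?_⟩
  rw [conjTranspose_mul, conjTranspose_conjTranspose, Matrix.mul_assoc, ← Matrix.mul_assoc E, hE,
    Matrix.one_mul, star_eq_conjTranspose]

theorem scalarBlockRow_mul {ι m k R : Type*} [Fintype ι] [Fintype m] [DecidableEq m]
    [Semiring R] (p : ι → R) (B : Matrix (ι × m) k R) :
    (of fun (a : m) (il : ι × m) => p il.1 * if a = il.2 then (1 : R) else 0) * B =
      ∑ i, p i • B.submatrix (Prod.mk i) id := by
  ext a c
  simp [mul_apply, Fintype.sum_prod_type, Matrix.sum_apply, ite_mul]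

theorem submatrix_mul_transpose_prodMk {ι m k R : Type*} [Fintype k] [NonUnitalNonAssocSemiring R]
    (C : Matrix (ι × m) k R) (i : ι) :
    (C * Cᵀ).submatrix (Prod.mk i) (Prod.mk i) =
      C.submatrix (Prod.mk i) id * (C.submatrix (Prod.mk i) id)ᵀ := by
  rw [transpose_submatrix, ← submatrix_mul _ _ _ _ _ Function.bijective_id]

end Matrix

theorem stmt11_general {n d q : ℕ} (hq : n * d ≤ q)
    (σ : Matrix (Fin d) (Fin q) ℝ) (σs : Fin n → Matrix (Fin d) (Fin q) ℝ)
    (p : Fin n → ℝ) :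
    (∃ Γ : Matrix (Fin n × Fin d) (Fin n × Fin d) ℝ, Γ.PosSemidef ∧
        (∀ i : Fin n, (Matrix.of fun k l => Γ (i, k) (i, l)) = σs i * (σs i)ᵀ) ∧
        ((Matrix.of fun (k : Fin d) (il : Fin n × Fin d) =>
            p il.1 * (if k = il.2 then (1:ℝ) else 0)) * Γ *
          (Matrix.of fun (k : Fin d) (il : Fin n × Fin d) =>
            p il.1 * (if k = il.2 then (1:ℝ) else 0))ᵀ - σ * σᵀ).PosSemidef) ↔
      (∃ O : Fin n → Matrix (Fin q) (Fin q) ℝ, (∀ i, O i * (O i)ᵀ = 1) ∧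
        ((∑ i, p i • (σs i * O i)) * (∑ i, p i • (σs i * O i))ᵀ - σ * σᵀ).PosSemidef) := by
  have sandwich_eq : ∀ (P : Matrix (Fin d) (Fin n × Fin d) ℝ)
      (C : Matrix (Fin n × Fin d) (Fin q) ℝ), P * (C * Cᵀ) * Pᵀ = (P * C) * (P * C)ᵀ := fun P C => by
    rw [transpose_mul, Matrix.mul_assoc, Matrix.mul_assoc, Matrix.mul_assoc]
  constructor
  · rintro ⟨Γ, hΓ, hdiag, hpsd⟩
    obtain ⟨C, rfl⟩ := hΓ.exists_eq_mul_conjTranspose_of_embedding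
      (finProdFinEquiv.toEmbedding.trans (Fin.castLEEmb hq))
    rw [conjTranspose_eq_transpose_of_trivial] at hdiag hpsd
    have hblock : ∀ i, C.submatrix (Prod.mk i) id * (C.submatrix (Prod.mk i) id)ᴴ =
        σs i * (σs i)ᴴ := fun i => by
      simp only [conjTranspose_eq_transpose_of_trivial, ← submatrix_mul_transpose_prodMk]
      exact hdiag i
    choose O hO hCO using fun i => exists_mem_unitaryGroup_eq_mul_of_mul_conjTranspose_eq (hblock i)
    refine ⟨O, fun i => ?_, ?_⟩
    · simpa only [star_eq_conjTranspose, conjTranspose_eq_transpose_of_trivial]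
        using mem_unitaryGroup_iff.mp (hO i)
    · rwa [sandwich_eq, scalarBlockRow_mul, Finset.sum_congr rfl fun i _ => by rw [hCO i]] at hpsd
  · rintro ⟨O, hO, hpsd⟩
    let B : Matrix (Fin n × Fin d) (Fin q) ℝ := of fun il c => (σs il.1 * O il.1) il.2 c
    refine ⟨B * Bᵀ, ?_, fun i => ?_, ?_⟩
    · simpa only [conjTranspose_eq_transpose_of_trivial] using posSemidef_self_mul_conjTranspose B
    · change (B * Bᵀ).submatrix (Prod.mk i) (Prod.mk i) = _
      rw [submatrix_mul_transpose_prodMk]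
      change σs i * O i * (σs i * O i)ᵀ = _
      rw [transpose_mul, Matrix.mul_assoc, ← Matrix.mul_assoc (O i), hO i, Matrix.one_mul]
    · rwa [sandwich_eq, scalarBlockRow_mul]

theorem stmt11 {n d q : ℕ} (hn : 2 ≤ n) (hq : n * d ≤ q)
    (σ : Matrix (Fin d) (Fin q) ℝ) (σs : Fin n → Matrix (Fin d) (Fin q) ℝ)
    (p : Fin n → ℝ) (hp : ∀ i, p i ∈ Set.Ioo (0:ℝ) 1) (hp1 : ∑ i, p i = 1) :
    (∃ Γ : Matrix (Fin n × Fin d) (Fin n × Fin d) ℝ, Γ.PosSemidef ∧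
        (∀ i : Fin n, (Matrix.of fun k l => Γ (i, k) (i, l)) = σs i * (σs i)ᵀ) ∧
        ((Matrix.of fun (k : Fin d) (il : Fin n × Fin d) =>
            p il.1 * (if k = il.2 then (1:ℝ) else 0)) * Γ *
          (Matrix.of fun (k : Fin d) (il : Fin n × Fin d) =>
            p il.1 * (if k = il.2 then (1:ℝ) else 0))ᵀ - σ * σᵀ).PosSemidef) ↔
      (∃ O : Fin n → Matrix (Fin q) (Fin q) ℝ, (∀ i, O i * (O i)ᵀ = 1) ∧
        ((∑ i, p i • (σs i * O i)) * (∑ i, p i • (σs i * O i))ᵀ - σ * σᵀ).PosSemidef) :=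
  stmt11_general hq σ σs p
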